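/- arXiv:2112.12858 — 3 statements merged into one kernel-verified Lean document; each statement's English description precedes it below -/
import Mathlib

section
/- Assuming the continuum hypothesis (2^ℵ₀ = ℵ₁), there exists a set Ω of functions ℕ → ℕ of cardinality 2^ℵ₀ such that for every function f : ℕ → ℕ, all but countably many g ∈ Ω satisfy f(n) < g(n) for all but finitely many n. -/
open Cardinal Set

/-- Any countable family of functions `ℕ → ℕ` is eventually dominated by some function. -/
lemma dominate_countable (S : Set (ℕ → ℕ)) (hS : S.Countable) :
    ∃ g : ℕ → ℕ, ∀ f ∈ S, {n : ℕ | ¬ f n < g n}.Finite := by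
  obtain ⟨e, he⟩ := ((hS.insert 0).exists_eq_range (insert_nonempty _ _))
  refine ⟨fun n => 1 + (Finset.range (n + 1)).sup (fun i => e i n), fun f hf => ?_⟩
  have : f ∈ Set.range e := by rw [← he]; exact Set.mem_insert_of_mem _ hf
  obtain ⟨i, rfl⟩ := this
  apply Set.Finite.subset (Set.finite_Iio i)
  intro n hn
  simp only [Set.mem_setOf_eq, not_lt] at hn
  by_contra h
  simp only [Set.mem_Iio, not_lt] at h
  have : e i n ≤ (Finset.range (n + 1)).sup (fun j => e j n) :=
    Finset.le_sup (f := fun j => e j n) (Finset.mem_range.mpr (Nat.lt_succ_of_le h))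
  omega

/-- Transfinite construction of a scale over a well-ordered index type with countable
initial segments. -/
lemma exists_scale_fun {α : Type*} [LinearOrder α] [WellFoundedLT α]
    (hcnt : ∀ a : α, {b : α | b < a}.Countable) (F : α → ℕ → ℕ) :
    ∃ G : α → ℕ → ℕ, (∀ a b : α, b < a → {n : ℕ | ¬ G b n < G a n}.Finite) ∧
      (∀ a b : α, b ≤ a → {n : ℕ | ¬ F b n < G a n}.Finite) := by
  have wf : WellFounded ((· < ·) : α → α → Prop) := IsWellFounded.wf
  have hScnt : ∀ (a : α) (IH : (b : α) → b < a → ℕ → ℕ),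
      ((F '' Set.Iic a) ∪ (Set.range fun b : {b : α // b < a} => IH b b.2)).Countable := by
    intro a IH
    refine Set.Countable.union (((hcnt a).insert a |>.image F |>.mono ?_)) ?_
    · rintro x ⟨b, hb, rfl⟩
      refine ⟨b, ?_, rfl⟩
      rcases (hb : b ≤ a).lt_or_eq with h | h
      exacts [Or.inr h, Or.inl h]
    · have : Countable {b : α // b < a} := (hcnt a).to_subtype
      exact Set.countable_range _
  set step : (a : α) → ((b : α) → b < a → ℕ → ℕ) → ℕ → ℕ := fun a IH =>
    Classical.choose (dominate_countable _ (hScnt a IH)) with hstep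
  set G : α → ℕ → ℕ := wf.fix step with hG
  have key : ∀ a : α, ∀ f ∈ (F '' Set.Iic a) ∪ (Set.range fun b : {b : α // b < a} => G b),
      {n : ℕ | ¬ f n < G a n}.Finite := by
    intro a
    have hfix : G a = step a (fun b _ => G b) := by rw [hG]; exact wf.fix_eq step a
    intro f hf
    rw [hfix]
    exact Classical.choose_spec (dominate_countable _ (hScnt a (fun b _ => G b))) f hf
  refine ⟨G, fun a b hb => key a _ (Or.inr ⟨⟨b, hb⟩, rfl⟩),
    fun a b hb => key a _ (Or.inl ⟨b, hb, rfl⟩)⟩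

/-- Assuming the continuum hypothesis `2^ℵ₀ = ℵ₁`, there is a continuum-sized
set `Ω` of functions `ℕ → ℕ` such that for every `f : ℕ → ℕ`, all but
countably many `g ∈ Ω` eventually dominate `f`. -/
theorem exists_scale_of_CH (hCH : Cardinal.continuum = Cardinal.aleph 1) :
    ∃ Ω : Set (ℕ → ℕ), Cardinal.mk Ω = Cardinal.continuum ∧
      ∀ f : ℕ → ℕ,
        {g : ℕ → ℕ | g ∈ Ω ∧ ¬ ({n : ℕ | ¬ f n < g n}.Finite)}.Countable := by
  have hCH0 : (Cardinal.continuum : Cardinal.{0}) = Cardinal.aleph 1 := by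
    apply Cardinal.lift_injective
    rwa [Cardinal.lift_continuum, Cardinal.lift_aleph, Ordinal.lift_one]
  have hmkT : #((Cardinal.aleph 1).ord.ToType) = Cardinal.aleph 1 := by
    rw [Cardinal.mk_toType, Cardinal.card_ord]
  have hmkF : #(ℕ → ℕ) = Cardinal.continuum := by
    rw [← Cardinal.power_def, Cardinal.mk_nat, Cardinal.aleph0_power_aleph0]
  have hEq : #(ℕ → ℕ) = #((Cardinal.aleph 1).ord.ToType) := by
    rw [hmkF, hmkT]; exact hCH0
  obtain ⟨e⟩ := Cardinal.eq.mp hEq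
  have hcnt : ∀ a : (Cardinal.aleph 1).ord.ToType, {b | b < a}.Countable := by
    intro a
    rw [Cardinal.countable_iff_lt_aleph_one]
    exact Cardinal.mk_Iio_ord_toType a
  obtain ⟨G, hGG, hGF⟩ := exists_scale_fun hcnt (fun a => e.symm a)
  have hGinj : Function.Injective G := by
    intro a b hab
    by_contra hne
    wlog h : b < a generalizing a b
    · exact this hab.symm (Ne.symm hne) (lt_of_le_of_ne (not_lt.mp h) hne)
    have hfin := hGG a b h
    have : {n : ℕ | ¬ G b n < G a n} = Set.univ := by
      ext n; simp [hab]
    rw [this] at hfin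
    exact Set.infinite_univ hfin
  refine ⟨Set.range G, ?_, ?_⟩
  · rw [Cardinal.mk_range_eq _ hGinj, hmkT]; exact hCH0.symm
  · intro f
    apply Set.Countable.mono ?_ ((hcnt (e f)).image G)
    rintro g ⟨⟨a, rfl⟩, hbad⟩
    rcases lt_or_ge a (e f) with h | h
    · exact ⟨a, h, rfl⟩
    · exact absurd (by simpa using hGF a (e f) h) hbad
end

section
/- (Banach–Kuratowski) If there exists a countably additive probability measure defined on all subsets of a set of cardinality 2^ℵ₀ that vanishes on singletons, then the continuum hypothesis fails, i.e., 2^ℵ₀ > ℵ₁. -/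
/-!
Under the continuum hypothesis the set has cardinality `ℵ₁`, so it can be well-ordered with all
initial segments countable. Choosing injections `f β : Iio β → ℕ` gives Ulam's matrix
`A n α = {β > α | f β α = n}`. For fixed `α` the sets `A n α` cover the co-countable set `Ioi α`,
so one of them has positive measure; for fixed `n` they are pairwise disjoint, so only countably
many of them have positive measure. Hence the uncountably many `α` would be covered by countably
many countable sets.
-/

open Cardinal MeasureTheory Set Function

universe u

section UlamMatrix

variable {X : Type*} [LinearOrder X]

def ulamMatrix (f : ∀ β : X, Iio β → ℕ) (n : ℕ) (α : X) : Set X :=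
  {β | ∃ h : α < β, f β ⟨α, h⟩ = n}

theorem pairwise_disjoint_ulamMatrix {f : ∀ β : X, Iio β → ℕ}
    (hf : ∀ β, Injective (f β)) (n : ℕ) :
    Pairwise (Disjoint on ulamMatrix f n) := fun _ _ hne =>
  disjoint_left.2 fun β ⟨_, hα⟩ ⟨_, hα'⟩ =>
    hne (congrArg Subtype.val (hf β (hα.trans hα'.symm)))

theorem iUnion_ulamMatrix (f : ∀ β : X, Iio β → ℕ) (α : X) :
    ⋃ n, ulamMatrix f n α = Ioi α :=
  Subset.antisymm (iUnion_subset fun _ _ ⟨h, _⟩ => h)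
    fun β hβ => mem_iUnion.2 ⟨f β ⟨α, hβ⟩, hβ, rfl⟩

end UlamMatrix

theorem countable_Iio_ord_aleph_one_toType (x : (ℵ₁ : Cardinal.{u}).ord.ToType) :
    (Iio x).Countable := by
  rw [← le_aleph0_iff_set_countable, ← lt_aleph_one_iff]
  simpa using mk_Iio_lt x (by simp)

namespace MeasureTheory.Measure

theorem eq_zero_of_countable_Iio {X : Type*} [LinearOrder X] [Uncountable X]
    (hX : ∀ x : X, (Iio x).Countable) [MeasurableSpace X] [DiscreteMeasurableSpace X]
    (μ : Measure X) [SFinite μ] [NullSingletonClass μ] : μ = 0 := by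
  choose f hf using fun β => @exists_injective_nat (Iio β) (hX β).to_subtype
  by_contra hμ
  have hIoi (α : X) : μ (Ioi α) ≠ 0 := by
    rwa [measure_congr (ae_eq_univ.2 ?_), Ne, measure_univ_eq_zero]
    rw [compl_Ioi, ← Iio_insert]
    exact ((hX α).insert α).measure_zero μ
  have hcover : (univ : Set X) ⊆ ⋃ n, {α | 0 < μ (ulamMatrix f n α)} := fun α _ => by
    have hα := hIoi α
    rw [← iUnion_ulamMatrix f, Ne, measure_iUnion_null_iff, not_forall] at hα
    simpa only [mem_iUnion, mem_ofPred_eq, pos_iff_ne_zero] using hα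
  exact not_countable_univ <| (countable_iUnion fun n =>
    countable_meas_pos_of_disjoint_iUnion (fun _ => .of_discrete)
      (pairwise_disjoint_ulamMatrix hf n)).mono hcover

theorem eq_zero_of_mk_eq_aleph_one {X : Type u} [MeasurableSpace X]
    [DiscreteMeasurableSpace X] (hX : #X = ℵ₁) (μ : Measure X) [SFinite μ]
    [NullSingletonClass μ] : μ = 0 := by
  classical
  obtain ⟨e⟩ : Nonempty (X ≃ (ℵ₁ : Cardinal.{u}).ord.ToType) := Cardinal.eq.1 (by simpa)
  let := e.linearOrder
  have : Uncountable X := aleph0_lt_mk_iff.1 (hX ▸ aleph0_lt_aleph_one)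
  exact eq_zero_of_countable_Iio
    (fun x => (countable_Iio_ord_aleph_one_toType (e x)).preimage e.injective) μ

end MeasureTheory.Measure

theorem exists_measure_eq_ofReal {X : Type*} [MeasurableSpace X] {μ : Set X → ℝ}
    (hnn : ∀ s, 0 ≤ μ s)
    (hadd : ∀ E : ℕ → Set X, Pairwise (Disjoint on E) →
      HasSum (fun n => μ (E n)) (μ (⋃ n, E n))) :
    ∃ ν : Measure X, ∀ s, MeasurableSet s → ν s = ENNReal.ofReal (μ s) := by
  have hempty : μ ∅ = 0 := by
    have h := hadd (fun _ => ∅) fun _ _ _ => disjoint_bot_left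
    rw [iUnion_empty] at h
    exact (summable_const_iff _).1 h.summable
  refine ⟨Measure.ofMeasurable (fun s _ => ENNReal.ofReal (μ s)) (by simp [hempty])
    fun E _ hE => ?_, fun s hs => Measure.ofMeasurable_apply s hs⟩
  rw [← (hadd E hE).tsum_eq, ENNReal.ofReal_tsum_of_nonneg (fun _ => hnn _) (hadd E hE).summable]

theorem banach_kuratowski_general (Ω : Type) (hΩ : Cardinal.mk Ω = Cardinal.continuum)
    (μ : Set Ω → ℝ)
    (hnn : ∀ s : Set Ω, 0 ≤ μ s)
    (huniv : μ Set.univ = 1)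
    (hadd : ∀ E : ℕ → Set Ω, Pairwise (Function.onFun Disjoint E) →
      HasSum (fun n => μ (E n)) (μ (⋃ n, E n)))
    (hsing : ∀ x : Ω, μ {x} = 0) :
    Cardinal.aleph 1 < Cardinal.continuum := by
  let : MeasurableSpace Ω := ⊤
  obtain ⟨ν, hν⟩ := exists_measure_eq_ofReal hnn hadd
  have : IsProbabilityMeasure ν := ⟨by rw [hν _ .of_discrete, huniv, ENNReal.ofReal_one]⟩
  have : NullSingletonClass ν := ⟨fun x => by rw [hν _ .of_discrete, hsing, ENNReal.ofReal_zero]⟩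
  refine aleph_one_le_continuum.lt_of_ne fun hCH => IsProbabilityMeasure.ne_zero ν ?_
  refine ν.eq_zero_of_mk_eq_aleph_one (hΩ.trans ?_)
  rwa [← lift_inj, lift_continuum, lift_aleph, Ordinal.lift_one, eq_comm]

/-- **Banach–Kuratowski.** If some set of cardinality `2^ℵ₀` carries a total,
countably additive probability measure vanishing on singletons, then the
continuum hypothesis fails: `ℵ₁ < 2^ℵ₀`. -/
theorem banach_kuratowski (Ω : Type) (hΩ : Cardinal.mk Ω = Cardinal.continuum)
    (μ : Set Ω → ℝ)
    (hnn : ∀ s : Set Ω, 0 ≤ μ s) (hle : ∀ s : Set Ω, μ s ≤ 1)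
    (huniv : μ Set.univ = 1)
    (hadd : ∀ E : ℕ → Set Ω, Pairwise (Function.onFun Disjoint E) →
      HasSum (fun n => μ (E n)) (μ (⋃ n, E n)))
    (hsing : ∀ x : Ω, μ {x} = 0) :
    Cardinal.aleph 1 < Cardinal.continuum :=
  banach_kuratowski_general Ω hΩ μ hnn huniv hadd hsing
end

section
/- Let Pr be a finitely additive probability on an algebra of events. If there exists a probability Pr* and a partition {E_i : i ∈ I} of the event space such that Pr(E_i) < Pr*(E_i) for all i ∈ I, then Pr is not countably additive; moreover the index set I must be countably infinite. -/
/-!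
If `Pr (E i) < Pr* (E i)` on every cell of a partition, the cells have positive `Pr*`-mass, and a
finitely additive probability can give positive mass to at most countably many disjoint sets, so
the partition is countable. It cannot be finite, since then both sides would sum to `1`. Enumerating
it as `E₀, E₁, …`, countable additivity of `Pr` would give
`1 = ∑ Pr (Eₙ) < ∑ Pr* (Eₙ) ≤ 1`.
-/

open Set Function

section

variable {Ω ι : Type*}

def IsFinitelyAdditive (μ : Set Ω → ℝ) : Prop :=
  ∀ s t : Set Ω, Disjoint s t → μ (s ∪ t) = μ s + μ t

namespace IsFinitelyAdditive

variable {μ ν : Set Ω → ℝ} {E : ι → Set Ω}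

theorem map_empty (hμ : IsFinitelyAdditive μ) : μ ∅ = 0 := by
  simpa using hμ ∅ ∅ (disjoint_empty ∅)

theorem mono (hμ : IsFinitelyAdditive μ) (hnn : ∀ s, 0 ≤ μ s) {s t : Set Ω} (hst : s ⊆ t) :
    μ s ≤ μ t := by
  have := hμ s (t \ s) disjoint_sdiff_right
  rw [union_sdiff_cancel hst] at this
  linarith [hnn (t \ s)]

theorem map_biUnion_finset (hμ : IsFinitelyAdditive μ) (hE : Pairwise (Disjoint on E))
    (s : Finset ι) : μ (⋃ i ∈ s, E i) = ∑ i ∈ s, μ (E i) := by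
  classical
  induction s using Finset.induction_on with
  | empty => simpa using hμ.map_empty
  | insert a s ha ih =>
    rw [Finset.sum_insert ha, ← ih, Finset.set_biUnion_insert]
    exact hμ _ _ <| disjoint_iUnion₂_right.2 fun i hi => hE (ne_of_mem_of_not_mem hi ha).symm

theorem sum_le_map_univ (hμ : IsFinitelyAdditive μ) (hnn : ∀ s, 0 ≤ μ s)
    (hE : Pairwise (Disjoint on E)) (s : Finset ι) : ∑ i ∈ s, μ (E i) ≤ μ univ :=
  hμ.map_biUnion_finset hE s ▸ hμ.mono hnn (subset_univ _)

theorem map_univ_eq_sum [Fintype ι] (hμ : IsFinitelyAdditive μ) (hE : Pairwise (Disjoint on E))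
    (hcover : ⋃ i, E i = univ) : μ univ = ∑ i, μ (E i) := by
  rw [← hμ.map_biUnion_finset hE, ← hcover]
  simp

theorem summable (hμ : IsFinitelyAdditive μ) (hnn : ∀ s, 0 ≤ μ s)
    (hE : Pairwise (Disjoint on E)) : Summable fun i => μ (E i) :=
  summable_of_sum_le (fun i => hnn (E i)) (hμ.sum_le_map_univ hnn hE)

theorem tsum_le_map_univ (hμ : IsFinitelyAdditive μ) (hnn : ∀ s, 0 ≤ μ s)
    (hE : Pairwise (Disjoint on E)) : ∑' i, μ (E i) ≤ μ univ :=
  Real.tsum_le_of_sum_le (fun i => hnn (E i)) (hμ.sum_le_map_univ hnn hE)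

theorem nonempty_of_iUnion_eq_univ (hμ : IsFinitelyAdditive μ) (huniv : μ univ ≠ 0)
    (hcover : ⋃ i, E i = univ) : Nonempty ι := by
  by_contra hι
  rw [not_nonempty_iff] at hι
  rw [← hcover, iUnion_of_empty, hμ.map_empty] at huniv
  exact huniv rfl

theorem countable_of_forall_pos (hμ : IsFinitelyAdditive μ) (hnn : ∀ s, 0 ≤ μ s)
    (hE : Pairwise (Disjoint on E)) (hpos : ∀ i, 0 < μ (E i)) : Countable ι := by
  have hsupp := (hμ.summable hnn hE).countable_support
  rwa [support_eq_univ fun i => (hpos i).ne', countable_univ_iff] at hsupp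

theorem infinite_of_forall_lt [Nonempty ι] (hμ : IsFinitelyAdditive μ)
    (hν : IsFinitelyAdditive ν) (huniv : μ univ = ν univ) (hE : Pairwise (Disjoint on E))
    (hcover : ⋃ i, E i = univ) (hlt : ∀ i, μ (E i) < ν (E i)) : Infinite ι := by
  by_contra hfin
  have : Fintype ι := @Fintype.ofFinite ι (not_infinite_iff_finite.1 hfin)
  have hsum : ∑ i, μ (E i) < ∑ i, ν (E i) :=
    Finset.sum_lt_sum_of_nonempty Finset.univ_nonempty fun i _ => hlt i
  rw [← hμ.map_univ_eq_sum hE hcover, ← hν.map_univ_eq_sum hE hcover] at hsum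
  exact hsum.ne huniv

theorem not_hasSum_of_forall_lt [Nonempty ι] (hν : IsFinitelyAdditive ν) (hνnn : ∀ s, 0 ≤ ν s)
    (huniv : μ univ = ν univ) (hE : Pairwise (Disjoint on E)) (hlt : ∀ i, μ (E i) < ν (E i)) :
    ¬ HasSum (fun i => μ (E i)) (μ univ) := fun hμE =>
  (hasSum_lt (fun i => (hlt i).le) (hlt (Classical.arbitrary ι)) hμE (hν.summable hνnn hE).hasSum).not_ge
    (huniv ▸ hν.tsum_le_map_univ hνnn hE)

end IsFinitelyAdditive

end

open IsFinitelyAdditive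

theorem not_countably_additive_of_pointwise_dominated_general (Ω : Type*) (I : Type*)
    (Pr PrStar : Set Ω → ℝ)
    (hPrnn : ∀ s, 0 ≤ Pr s) (hPruniv : Pr Set.univ = 1)
    (hPradd : ∀ s t : Set Ω, Disjoint s t → Pr (s ∪ t) = Pr s + Pr t)
    (hStarnn : ∀ s, 0 ≤ PrStar s) (hStaruniv : PrStar Set.univ = 1)
    (hStaradd : ∀ s t : Set Ω, Disjoint s t → PrStar (s ∪ t) = PrStar s + PrStar t)
    (E : I → Set Ω)
    (hdisj : Pairwise (Function.onFun Disjoint E)) (hcover : (⋃ i, E i) = Set.univ)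
    (hlt : ∀ i, Pr (E i) < PrStar (E i)) :
    (¬ ∀ F : ℕ → Set Ω, Pairwise (Function.onFun Disjoint F) →
        HasSum (fun n => Pr (F n)) (Pr (⋃ n, F n))) ∧
    Countable I ∧ Infinite I := by
  have huniv : Pr univ = PrStar univ := hPruniv.trans hStaruniv.symm
  have : Nonempty I := nonempty_of_iUnion_eq_univ hPradd (by simp [hPruniv]) hcover
  have hcount : Countable I :=
    countable_of_forall_pos hStaradd hStarnn hdisj fun i => (hPrnn _).trans_lt (hlt i)
  have hinf : Infinite I := infinite_of_forall_lt hPradd hStaradd huniv hdisj hcover hlt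
  refine ⟨fun hσ => ?_, hcount, hinf⟩
  obtain ⟨e⟩ : Nonempty (ℕ ≃ I) := nonempty_equiv_of_countable.map Equiv.symm
  have hF : Pairwise (Disjoint on (E ∘ e)) := hdisj.comp_of_injective e.injective
  refine not_hasSum_of_forall_lt hStaradd hStarnn huniv hF (fun n => hlt (e n)) ?_
  simpa [e.surjective.iUnion_comp E, hcover] using hσ (E ∘ e) hF

/-- If `Pr` and `Pr*` are finitely additive probabilities on `𝒫(Ω)` and there is
a partition `{E i : i ∈ I}` of `Ω` into nonempty sets with `Pr (E i) < Pr* (E i)`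
for all `i`, then `Pr` is not countably additive, and moreover `I` is countably
infinite. -/
theorem not_countably_additive_of_pointwise_dominated (Ω : Type*) (I : Type*)
    (Pr PrStar : Set Ω → ℝ)
    (hPrnn : ∀ s, 0 ≤ Pr s) (hPruniv : Pr Set.univ = 1)
    (hPradd : ∀ s t : Set Ω, Disjoint s t → Pr (s ∪ t) = Pr s + Pr t)
    (hStarnn : ∀ s, 0 ≤ PrStar s) (hStaruniv : PrStar Set.univ = 1)
    (hStaradd : ∀ s t : Set Ω, Disjoint s t → PrStar (s ∪ t) = PrStar s + PrStar t)
    (E : I → Set Ω) (hne : ∀ i, (E i).Nonempty)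
    (hdisj : Pairwise (Function.onFun Disjoint E)) (hcover : (⋃ i, E i) = Set.univ)
    (hlt : ∀ i, Pr (E i) < PrStar (E i)) :
    (¬ ∀ F : ℕ → Set Ω, Pairwise (Function.onFun Disjoint F) →
        HasSum (fun n => Pr (F n)) (Pr (⋃ n, F n))) ∧
    Countable I ∧ Infinite I :=
  not_countably_additive_of_pointwise_dominated_general Ω I Pr PrStar hPrnn hPruniv hPradd hStarnn
    hStaruniv hStaradd E hdisj hcover hlt
end
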